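/- Let (X₂ᵢ, Wᵢ), i=1,…,n, be i.i.d. finite-valued random pairs, let K₂ be a finite-valued random variable independent of (X₂ⁿ, Wⁿ), and let Ỹ₂ⁿ = (Ỹ₂₁,…,Ỹ₂ₙ) be any finite-valued random vector jointly distributed with (K₂, X₂ⁿ, Wⁿ). Then Σ_{i=1}^n H(Ỹ₂ᵢ|Wᵢ) ≥ Σ_{i=1}^n I(K₂, Ỹ₂_{∼i}, Ỹ₂ᵢ ; X₂ᵢ | Wᵢ), where Ỹ₂_{∼i} denotes all coordinates of Ỹ₂ⁿ except the i-th. -/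
import Mathlib


open scoped BigOperators

noncomputable section

/-- `p` is a probability mass function on the finite type `α`. -/
def IsPMF {α : Type*} [Fintype α] (p : α → ℝ) : Prop :=
  (∀ a, 0 ≤ p a) ∧ ∑ a, p a = 1

/-- Distribution (pushforward pmf) of the random variable `X` under the pmf `μ`. -/
def rvDist {Ω α : Type*} [Fintype Ω] [DecidableEq α] (μ : Ω → ℝ) (X : Ω → α) : α → ℝ :=
  fun a => ∑ ω, if X ω = a then μ ω else 0

/-- Shannon entropy (natural logarithm) of a pmf on a finite type. -/
def ent {α : Type*} [Fintype α] (p : α → ℝ) : ℝ := ∑ a, Real.negMulLog (p a)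

/-- Entropy of a random variable `X` under the pmf `μ`. -/
def H {Ω α : Type*} [Fintype Ω] [Fintype α] [DecidableEq α] (μ : Ω → ℝ) (X : Ω → α) : ℝ :=
  ent (rvDist μ X)

/-- Conditional entropy `H(X | Z)`. -/
def condH {Ω α γ : Type*} [Fintype Ω] [Fintype α] [Fintype γ] [DecidableEq α] [DecidableEq γ]
    (μ : Ω → ℝ) (X : Ω → α) (Z : Ω → γ) : ℝ :=
  H μ (fun ω => (X ω, Z ω)) - H μ Z

/-- Mutual information `I(X; Y)`. -/
def mutI {Ω α β : Type*} [Fintype Ω] [Fintype α] [Fintype β] [DecidableEq α] [DecidableEq β]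
    (μ : Ω → ℝ) (X : Ω → α) (Y : Ω → β) : ℝ :=
  H μ X + H μ Y - H μ (fun ω => (X ω, Y ω))

/-- Conditional mutual information `I(X; Y | Z)`. -/
def condI {Ω α β γ : Type*} [Fintype Ω] [Fintype α] [Fintype β] [Fintype γ]
    [DecidableEq α] [DecidableEq β] [DecidableEq γ]
    (μ : Ω → ℝ) (X : Ω → α) (Y : Ω → β) (Z : Ω → γ) : ℝ :=
  H μ (fun ω => (X ω, Z ω)) + H μ (fun ω => (Y ω, Z ω))
    - H μ (fun ω => (X ω, Y ω, Z ω)) - H μ Z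

set_option linter.unusedSectionVars false

section Basic
variable {Ω α β γ : Type*} [Fintype Ω]

lemma negMulLog_add_le {a b : ℝ} (ha : 0 ≤ a) (hb : 0 ≤ b) :
    Real.negMulLog (a + b) ≤ Real.negMulLog a + Real.negMulLog b := by
  rcases ha.eq_or_lt with h | h
  · simp [← h]
  rcases hb.eq_or_lt with h' | h'
  · simp [← h']
  have hab : (0:ℝ) < a + b := by linarith
  have h1 : Real.log a ≤ Real.log (a + b) := Real.log_le_log h (by linarith)
  have h2 : Real.log b ≤ Real.log (a + b) := Real.log_le_log h' (by linarith)
  simp only [Real.negMulLog]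
  nlinarith

lemma negMulLog_sum_le {ι : Type*} (s : Finset ι) (t : ι → ℝ) (h : ∀ i ∈ s, 0 ≤ t i) :
    Real.negMulLog (∑ i ∈ s, t i) ≤ ∑ i ∈ s, Real.negMulLog (t i) := by
  induction s using Finset.cons_induction with
  | empty => simp
  | cons a s ha ih =>
    rw [Finset.sum_cons, Finset.sum_cons]
    have h1 : 0 ≤ t a := h a (Finset.mem_cons_self a s)
    have h2 : 0 ≤ ∑ i ∈ s, t i :=
      Finset.sum_nonneg fun i hi => h i (Finset.mem_cons_of_mem hi)
    calc Real.negMulLog (t a + ∑ i ∈ s, t i)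
        ≤ Real.negMulLog (t a) + Real.negMulLog (∑ i ∈ s, t i) := negMulLog_add_le h1 h2
      _ ≤ _ := by
          have := ih (fun i hi => h i (Finset.mem_cons_of_mem hi))
          linarith

variable [Fintype α] [Fintype β] [DecidableEq α] [DecidableEq β] (μ : Ω → ℝ)

lemma rvDist_nonneg (hμ0 : ∀ ω, 0 ≤ μ ω) (X : Ω → α) (a : α) : 0 ≤ rvDist μ X a :=
  Finset.sum_nonneg fun ω _ => by split <;> simp [hμ0 ω]

lemma rvDist_sum (X : Ω → α) : ∑ a, rvDist μ X a = ∑ ω, μ ω := by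
  unfold rvDist
  rw [Finset.sum_comm]
  exact Finset.sum_congr rfl fun ω _ => by simp

lemma rvDist_comp (X : Ω → α) (f : α → β) (b : β) :
    rvDist μ (fun ω => f (X ω)) b = ∑ a, if f a = b then rvDist μ X a else 0 := by
  unfold rvDist
  have key : ∀ a, (if f a = b then ∑ ω, if X ω = a then μ ω else 0 else 0)
      = ∑ ω, if X ω = a then (if f (X ω) = b then μ ω else 0) else 0 := by
    intro a
    by_cases h : f a = b
    · rw [if_pos h]
      refine Finset.sum_congr rfl fun ω _ => ?_
      by_cases h2 : X ω = a
      · rw [if_pos h2, if_pos h2, h2, if_pos h]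
      · rw [if_neg h2, if_neg h2]
    · rw [if_neg h]
      symm
      refine Finset.sum_eq_zero fun ω _ => ?_
      by_cases h2 : X ω = a
      · rw [if_pos h2, h2, if_neg h]
      · rw [if_neg h2]
  rw [Finset.sum_congr rfl fun a _ => key a, Finset.sum_comm]
  refine Finset.sum_congr rfl fun ω _ => ?_
  simp

lemma ent_push_le (p : α → ℝ) (hp : ∀ a, 0 ≤ p a) (f : α → β) :
    ent (fun b => ∑ a, if f a = b then p a else 0) ≤ ent p := by
  unfold ent
  have step : ∀ b : β, Real.negMulLog (∑ a, if f a = b then p a else 0)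
      ≤ ∑ a, if f a = b then Real.negMulLog (p a) else 0 := by
    intro b
    have h1 : ∀ a ∈ Finset.univ, 0 ≤ (fun a => if f a = b then p a else 0) a := by
      intro a _
      dsimp only
      split <;> simp [hp a]
    have h2 := negMulLog_sum_le Finset.univ (fun a => if f a = b then p a else 0) h1
    simp only [apply_ite Real.negMulLog, Real.negMulLog_zero] at h2
    exact h2
  calc ∑ b, Real.negMulLog (∑ a, if f a = b then p a else 0)
      ≤ ∑ b, ∑ a, if f a = b then Real.negMulLog (p a) else 0 :=
        Finset.sum_le_sum fun b _ => step b
    _ = ∑ a, Real.negMulLog (p a) := by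
        rw [Finset.sum_comm]
        exact Finset.sum_congr rfl fun a _ => by simp

end Basic

section Sub
variable {α β γ : Type*} [Fintype α] [Fintype β] [Fintype γ]

lemma negMulLog_eq (x : ℝ) : Real.negMulLog x = x * (-Real.log x) := by
  unfold Real.negMulLog; ring

lemma flat3 (F : α × β × γ → ℝ) : ∑ t, F t = ∑ x, ∑ y, ∑ z, F (x, y, z) := by
  simp [Fintype.sum_prod_type]

lemma ent_submodular (r : α × β × γ → ℝ) (hr : ∀ t, 0 ≤ r t) :
    ent r + ent (fun z => ∑ x, ∑ y, r (x, y, z)) ≤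
      ent (fun p : α × γ => ∑ y, r (p.1, y, p.2)) +
        ent (fun p : β × γ => ∑ x, r (x, p.1, p.2)) := by
  classical
  set m13 : α → γ → ℝ := fun x z => ∑ y, r (x, y, z) with hm13
  set m23 : β → γ → ℝ := fun y z => ∑ x, r (x, y, z) with hm23
  set m3 : γ → ℝ := fun z => ∑ x, ∑ y, r (x, y, z) with hm3
  have hm13nn : ∀ x z, 0 ≤ m13 x z := fun x z =>
    Finset.sum_nonneg fun y _ => hr _
  have hm23nn : ∀ y z, 0 ≤ m23 y z := fun y z =>
    Finset.sum_nonneg fun x _ => hr _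
  have hm3nn : ∀ z, 0 ≤ m3 z := fun z =>
    Finset.sum_nonneg fun x _ => Finset.sum_nonneg fun y _ => hr _
  have h13le : ∀ x y z, r (x, y, z) ≤ m13 x z := fun x y z =>
    Finset.single_le_sum (fun y _ => hr (x, y, z)) (Finset.mem_univ y)
  have h23le : ∀ x y z, r (x, y, z) ≤ m23 y z := fun x y z =>
    Finset.single_le_sum (fun x _ => hr (x, y, z)) (Finset.mem_univ x)
  have h133le : ∀ x z, m13 x z ≤ m3 z := fun x z =>
    Finset.single_le_sum (fun x _ => hm13nn x z) (Finset.mem_univ x)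
  have hzsum : ∀ z, m3 z = ∑ y, m23 y z := fun z => Finset.sum_comm ..
  have h233le : ∀ y z, m23 y z ≤ m3 z := fun y z => by
    rw [hzsum z]
    exact Finset.single_le_sum (fun y _ => hm23nn y z) (Finset.mem_univ y)
  -- entropies as sums over the triple product
  have e_r : ent r = ∑ t : α × β × γ, Real.negMulLog (r t) := rfl
  have e13 : ent (fun p : α × γ => m13 p.1 p.2)
      = ∑ t : α × β × γ, r t * (-Real.log (m13 t.1 t.2.2)) := by
    rw [flat3]
    unfold ent
    rw [Fintype.sum_prod_type]
    refine Finset.sum_congr rfl fun x _ => ?_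
    calc ∑ z, Real.negMulLog (m13 x z)
        = ∑ z, ∑ y, r (x, y, z) * (-Real.log (m13 x z)) := by
          refine Finset.sum_congr rfl fun z _ => ?_
          rw [negMulLog_eq]
          conv_lhs => rw [hm13]
          exact Finset.sum_mul ..
      _ = ∑ y, ∑ z, r (x, y, z) * (-Real.log (m13 x z)) := Finset.sum_comm
  have e23 : ent (fun p : β × γ => m23 p.1 p.2)
      = ∑ t : α × β × γ, r t * (-Real.log (m23 t.2.1 t.2.2)) := by
    rw [flat3]
    unfold ent
    rw [Fintype.sum_prod_type]
    calc ∑ y, ∑ z, Real.negMulLog (m23 y z)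
        = ∑ y, ∑ z, ∑ x, r (x, y, z) * (-Real.log (m23 y z)) := by
          refine Finset.sum_congr rfl fun y _ => Finset.sum_congr rfl fun z _ => ?_
          rw [negMulLog_eq]
          conv_lhs => rw [hm23]
          exact Finset.sum_mul ..
      _ = ∑ y, ∑ x, ∑ z, r (x, y, z) * (-Real.log (m23 y z)) :=
          Finset.sum_congr rfl fun y _ => Finset.sum_comm
      _ = ∑ x, ∑ y, ∑ z, r (x, y, z) * (-Real.log (m23 y z)) := Finset.sum_comm
  have e3 : ent m3 = ∑ t : α × β × γ, r t * (-Real.log (m3 t.2.2)) := by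
    rw [flat3]
    unfold ent
    calc ∑ z, Real.negMulLog (m3 z)
        = ∑ z, ∑ x, ∑ y, r (x, y, z) * (-Real.log (m3 z)) := by
          refine Finset.sum_congr rfl fun z _ => ?_
          rw [negMulLog_eq]
          conv_lhs => rw [hm3]
          rw [Finset.sum_mul]
          exact Finset.sum_congr rfl fun x _ => Finset.sum_mul ..
      _ = ∑ x, ∑ z, ∑ y, r (x, y, z) * (-Real.log (m3 z)) := Finset.sum_comm
      _ = ∑ x, ∑ y, ∑ z, r (x, y, z) * (-Real.log (m3 z)) :=
          Finset.sum_congr rfl fun x _ => Finset.sum_comm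
  rw [e_r, e13, e23, e3, ← Finset.sum_add_distrib, ← Finset.sum_add_distrib]
  have key : ∀ t : α × β × γ,
      Real.negMulLog (r t) + r t * (-Real.log (m3 t.2.2))
        ≤ r t * (-Real.log (m13 t.1 t.2.2)) + r t * (-Real.log (m23 t.2.1 t.2.2))
          + (m13 t.1 t.2.2 * m23 t.2.1 t.2.2 / m3 t.2.2 - r t) := by
    rintro ⟨x, y, z⟩
    dsimp only
    rcases (hr (x, y, z)).eq_or_lt with h0 | hpos
    · rw [← h0]
      simp only [Real.negMulLog_zero, zero_mul, add_zero, zero_add, sub_zero]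
      exact div_nonneg (mul_nonneg (hm13nn x z) (hm23nn y z)) (hm3nn z)
    · have h13 : 0 < m13 x z := lt_of_lt_of_le hpos (h13le x y z)
      have h23 : 0 < m23 y z := lt_of_lt_of_le hpos (h23le x y z)
      have h3 : 0 < m3 z := lt_of_lt_of_le h13 (h133le x z)
      set s : ℝ := m13 x z * m23 y z / m3 z with hs
      have hspos : 0 < s := by rw [hs]; positivity
      have hlog : Real.log (s / r (x, y, z)) ≤ s / r (x, y, z) - 1 :=
        Real.log_le_sub_one_of_pos (by positivity)
      rw [Real.log_div hspos.ne' hpos.ne'] at hlog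
      have hls : Real.log s = Real.log (m13 x z) + Real.log (m23 y z) - Real.log (m3 z) := by
        rw [hs, Real.log_div (by positivity) h3.ne', Real.log_mul h13.ne' h23.ne']
      have h2 := mul_le_mul_of_nonneg_left hlog hpos.le
      rw [mul_sub, mul_sub] at h2
      have h4 : r (x, y, z) * (s / r (x, y, z)) = s := by field_simp
      rw [h4] at h2
      rw [negMulLog_eq]
      nlinarith [h2, hls]
  refine (Finset.sum_le_sum fun t (_ : t ∈ Finset.univ) => key t).trans ?_
  rw [Finset.sum_add_distrib]
  have hT : ∑ t : α × β × γ, r t = ∑ z, m3 z := by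
    calc ∑ t : α × β × γ, r t = ∑ x, ∑ y, ∑ z, r (x, y, z) := flat3 r
      _ = ∑ x, ∑ z, ∑ y, r (x, y, z) := Finset.sum_congr rfl fun x _ => Finset.sum_comm
      _ = ∑ z, ∑ x, ∑ y, r (x, y, z) := Finset.sum_comm
  have hSz : ∀ z, ∑ x, ∑ y, m13 x z * m23 y z / m3 z ≤ m3 z := by
    intro z
    rcases (hm3nn z).eq_or_lt with h0 | h0
    · have hx0 : ∀ x, m13 x z = 0 := fun x =>
        le_antisymm ((h133le x z).trans (le_of_eq h0.symm)) (hm13nn x z)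
      have : ∀ x, ∑ y, m13 x z * m23 y z / m3 z = 0 := by
        intro x
        refine Finset.sum_eq_zero fun y _ => ?_
        rw [hx0 x, zero_mul, zero_div]
      rw [Finset.sum_congr rfl fun x _ => this x, Finset.sum_const, smul_zero]
      exact hm3nn z
    · have hcollect : ∑ x, ∑ y, m13 x z * m23 y z / m3 z
          = (∑ x, m13 x z) * (∑ y, m23 y z) / m3 z := by
        rw [Finset.sum_mul_sum, Finset.sum_div]
        refine Finset.sum_congr rfl fun x _ => ?_
        rw [Finset.sum_div]
      rw [hcollect, ← hzsum z]
      have : (∑ x, m13 x z) = m3 z := rfl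
      rw [this, mul_div_assoc, div_self h0.ne', mul_one]
  have hS : ∑ t : α × β × γ, (m13 t.1 t.2.2 * m23 t.2.1 t.2.2 / m3 t.2.2 - r t) ≤ 0 := by
    rw [Finset.sum_sub_distrib, hT]
    have : ∑ t : α × β × γ, m13 t.1 t.2.2 * m23 t.2.1 t.2.2 / m3 t.2.2 ≤ ∑ z, m3 z := by
      calc ∑ t : α × β × γ, m13 t.1 t.2.2 * m23 t.2.1 t.2.2 / m3 t.2.2
          = ∑ x, ∑ y, ∑ z, m13 x z * m23 y z / m3 z := flat3 _
        _ = ∑ x, ∑ z, ∑ y, m13 x z * m23 y z / m3 z :=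
            Finset.sum_congr rfl fun x _ => Finset.sum_comm
        _ = ∑ z, ∑ x, ∑ y, m13 x z * m23 y z / m3 z := Finset.sum_comm
        _ ≤ ∑ z, m3 z := Finset.sum_le_sum fun z _ => hSz z
    linarith
  linarith [hS]
end Sub

section Prod
variable {A B : Type*} [Fintype A] [Fintype B]

lemma ent_prod (u : A → ℝ) (v : B → ℝ) (hu : IsPMF u) (hv : IsPMF v) :
    ent (fun p : A × B => u p.1 * v p.2) = ent u + ent v := by
  unfold ent
  rw [Fintype.sum_prod_type]
  have inner : ∀ a, ∑ b, Real.negMulLog (u a * v b)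
      = Real.negMulLog (u a) + u a * ∑ b, Real.negMulLog (v b) := by
    intro a
    rw [Finset.sum_congr rfl fun b _ => Real.negMulLog_mul (u a) (v b),
      Finset.sum_add_distrib, ← Finset.sum_mul, hv.2, one_mul, ← Finset.mul_sum]
  rw [Finset.sum_congr rfl fun a _ => inner a, Finset.sum_add_distrib,
    ← Finset.sum_mul, hu.2, one_mul]

lemma sum_pi_prod (q' : A → ℝ) (h1 : ∑ a, q' a = 1) (n : ℕ) :
    ∑ b : Fin n → A, ∏ i, q' (b i) = 1 := by
  classical
  rw [← Fintype.piFinset_univ, ← Finset.prod_univ_sum]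
  simp [h1]

lemma ent_pi (q' : A → ℝ) (hq : IsPMF q') (n : ℕ) :
    ent (fun b : Fin n → A => ∏ i, q' (b i)) = n * ent q' := by
  induction n with
  | zero => simp [ent]
  | succ n ih =>
    have hnn : ∀ b : Fin n → A, 0 ≤ ∏ i, q' (b i) :=
      fun b => Finset.prod_nonneg fun i _ => hq.1 _
    have hpmf : IsPMF (fun b : Fin n → A => ∏ i, q' (b i)) :=
      ⟨hnn, sum_pi_prod q' hq.2 n⟩
    have key : ent (fun b : Fin (n + 1) → A => ∏ i, q' (b i))
        = ent (fun p : A × (Fin n → A) => q' p.1 * ∏ i, q' (p.2 i)) := by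
      unfold ent
      rw [← Equiv.sum_comp (Fin.consEquiv (fun _ : Fin (n + 1) => A))
        (fun b : Fin (n + 1) → A => Real.negMulLog (∏ i, q' (b i)))]
      refine Finset.sum_congr rfl fun p _ => ?_
      congr 1
      calc ∏ i : Fin (n + 1), q' (((Fin.consEquiv (fun _ : Fin (n + 1) => A)) p) i)
          = ∏ i : Fin (n + 1), q' ((Fin.cons p.1 p.2 : Fin (n + 1) → A) i) := rfl
        _ = q' p.1 * ∏ i, q' (p.2 i) := by
            rw [show (fun i => q' ((Fin.cons p.1 p.2 : Fin (n + 1) → A) i))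
              = (Fin.cons (q' p.1) (fun i => q' (p.2 i)) : Fin (n + 1) → ℝ) from ?_,
              Fin.prod_cons]
            funext i
            refine Fin.cases rfl (fun i => rfl) i
    rw [key, ent_prod q' _ hq hpmf, ih]
    push_cast
    ring

variable [DecidableEq A] [DecidableEq B]

lemma sum_prod_pi {n : ℕ} (F : Fin n → A → ℝ) :
    ∑ b : Fin n → A, ∏ j, F j (b j) = ∏ j, ∑ a, F j a := by
  classical
  rw [Finset.prod_univ_sum, Fintype.piFinset_univ]

lemma sum_pi_eval (q' : A → ℝ) (h1 : ∑ a, q' a = 1) {n : ℕ} (i : Fin n) (c : A) :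
    ∑ b : Fin n → A, (if b i = c then ∏ j, q' (b j) else 0) = q' c := by
  classical
  have key : ∀ b : Fin n → A, (if b i = c then ∏ j, q' (b j) else 0)
      = ∏ j, (if j = i then (if b j = c then q' (b j) else 0) else q' (b j)) := by
    intro b
    by_cases hb : b i = c
    · rw [if_pos hb]
      refine Finset.prod_congr rfl fun j _ => ?_
      by_cases hj : j = i
      · subst hj; rw [if_pos rfl, if_pos hb]
      · rw [if_neg hj]
    · rw [if_neg hb]
      symm
      refine Finset.prod_eq_zero (Finset.mem_univ i) ?_
      rw [if_pos rfl, if_neg hb]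
  calc ∑ b : Fin n → A, (if b i = c then ∏ j, q' (b j) else 0)
      = ∑ b : Fin n → A, ∏ j,
          (fun j a => if j = i then (if a = c then q' a else 0) else q' a) j (b j) :=
        Finset.sum_congr rfl fun b _ => key b
    _ = ∏ j, ∑ a, (fun j a => if j = i then (if a = c then q' a else 0) else q' a) j a :=
        sum_prod_pi (fun j a => if j = i then (if a = c then q' a else 0) else q' a)
    _ = q' c := by
        rw [Finset.prod_eq_single i]
        · simp
        · intro j _ hj
          simp [hj, h1]
        · intro h
          exact absurd (Finset.mem_univ i) h

lemma sum_pi_push (q' : A → ℝ) (g : A → B) {n : ℕ} (w : Fin n → B) :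
    ∑ b : Fin n → A, (if (fun i => g (b i)) = w then ∏ j, q' (b j) else 0)
      = ∏ i, ∑ a, (if g a = w i then q' a else 0) := by
  classical
  have key : ∀ b : Fin n → A, (if (fun i => g (b i)) = w then ∏ j, q' (b j) else 0)
      = ∏ j, (if g (b j) = w j then q' (b j) else 0) := by
    intro b
    by_cases hb : (fun i => g (b i)) = w
    · rw [if_pos hb]
      refine Finset.prod_congr rfl fun j _ => ?_
      rw [if_pos (congrFun hb j)]
    · rw [if_neg hb]
      symm
      obtain ⟨j, hj⟩ : ∃ j, g (b j) ≠ w j := by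
        by_contra h
        push_neg at h
        exact hb (funext h)
      exact Finset.prod_eq_zero (Finset.mem_univ j) (if_neg hj)
  calc ∑ b : Fin n → A, (if (fun i => g (b i)) = w then ∏ j, q' (b j) else 0)
      = ∑ b : Fin n → A, ∏ j, (fun j a => if g a = w j then q' a else 0) j (b j) :=
        Finset.sum_congr rfl fun b _ => key b
    _ = ∏ j, ∑ a, (fun j a => if g a = w j then q' a else 0) j a :=
        sum_prod_pi (fun j a => if g a = w j then q' a else 0)
    _ = ∏ i, ∑ a, (if g a = w i then q' a else 0) := rfl
end Prod

section RV
variable {Ω α β γ : Type*} [Fintype Ω] [Fintype α] [Fintype β] [Fintype γ]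
  [DecidableEq α] [DecidableEq β] [DecidableEq γ] (μ : Ω → ℝ)

lemma H_comp_le (hμ0 : ∀ ω, 0 ≤ μ ω) (X : Ω → α) (f : α → β) :
    H μ (fun ω => f (X ω)) ≤ H μ X := by
  unfold H
  have hre : rvDist μ (fun ω => f (X ω)) = fun b => ∑ a, if f a = b then rvDist μ X a else 0 :=
    funext (rvDist_comp μ X f)
  rw [hre]
  exact ent_push_le (rvDist μ X) (rvDist_nonneg μ hμ0 X) f

lemma H_eq_comp (hμ0 : ∀ ω, 0 ≤ μ ω) (X : Ω → α) (Y : Ω → β) (f : α → β) (g : β → α)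
    (hf : ∀ ω, Y ω = f (X ω)) (hg : ∀ ω, X ω = g (Y ω)) : H μ X = H μ Y := by
  refine le_antisymm ?_ ?_
  · rw [show X = fun ω => g (Y ω) from funext hg]
    exact H_comp_le μ hμ0 Y g
  · rw [show Y = fun ω => f (X ω) from funext hf]
    exact H_comp_le μ hμ0 X f

lemma marg13 (X : Ω → α) (Y : Ω → β) (Z : Ω → γ) (b : α × γ) :
    rvDist μ (fun ω => (X ω, Z ω)) b
      = ∑ y, rvDist μ (fun ω => (X ω, Y ω, Z ω)) (b.1, y, b.2) := by
  obtain ⟨b1, b2⟩ := b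
  calc rvDist μ (fun ω => (X ω, Z ω)) (b1, b2)
      = ∑ a : α × β × γ, if (a.1, a.2.2) = (b1, b2)
          then rvDist μ (fun ω => (X ω, Y ω, Z ω)) a else 0 :=
        rvDist_comp μ (fun ω => (X ω, Y ω, Z ω)) (fun t => (t.1, t.2.2)) (b1, b2)
    _ = ∑ y, rvDist μ (fun ω => (X ω, Y ω, Z ω)) (b1, y, b2) := by
        rw [Fintype.sum_prod_type]
        simp [Fintype.sum_prod_type, Prod.ext_iff, ite_and, Finset.sum_ite_eq,
          Finset.sum_ite_eq']

lemma marg23 (X : Ω → α) (Y : Ω → β) (Z : Ω → γ) (b : β × γ) :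
    rvDist μ (fun ω => (Y ω, Z ω)) b
      = ∑ x, rvDist μ (fun ω => (X ω, Y ω, Z ω)) (x, b.1, b.2) := by
  obtain ⟨b1, b2⟩ := b
  calc rvDist μ (fun ω => (Y ω, Z ω)) (b1, b2)
      = ∑ a : α × β × γ, if (a.2.1, a.2.2) = (b1, b2)
          then rvDist μ (fun ω => (X ω, Y ω, Z ω)) a else 0 :=
        rvDist_comp μ (fun ω => (X ω, Y ω, Z ω)) (fun t => (t.2.1, t.2.2)) (b1, b2)
    _ = ∑ x, rvDist μ (fun ω => (X ω, Y ω, Z ω)) (x, b1, b2) := by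
        simp [Fintype.sum_prod_type, Prod.ext_iff, ite_and, Finset.sum_ite_eq,
          Finset.sum_ite_eq']

lemma marg3 (X : Ω → α) (Y : Ω → β) (Z : Ω → γ) (z : γ) :
    rvDist μ Z z = ∑ x, ∑ y, rvDist μ (fun ω => (X ω, Y ω, Z ω)) (x, y, z) := by
  calc rvDist μ Z z
      = ∑ a : α × β × γ, if a.2.2 = z
          then rvDist μ (fun ω => (X ω, Y ω, Z ω)) a else 0 :=
        rvDist_comp μ (fun ω => (X ω, Y ω, Z ω)) (fun t => t.2.2) z
    _ = ∑ x, ∑ y, rvDist μ (fun ω => (X ω, Y ω, Z ω)) (x, y, z) := by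
        simp [Fintype.sum_prod_type, Finset.sum_ite_eq, Finset.sum_ite_eq']

lemma condI_nonneg (hμ0 : ∀ ω, 0 ≤ μ ω) (X : Ω → α) (Y : Ω → β) (Z : Ω → γ) :
    0 ≤ condI μ X Y Z := by
  classical
  have hrnn := rvDist_nonneg μ hμ0 (fun ω => (X ω, Y ω, Z ω))
  have h13 : rvDist μ (fun ω => (X ω, Z ω))
      = fun p : α × γ => ∑ y, rvDist μ (fun ω => (X ω, Y ω, Z ω)) (p.1, y, p.2) :=
    funext fun b => marg13 μ X Y Z b
  have h23 : rvDist μ (fun ω => (Y ω, Z ω))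
      = fun p : β × γ => ∑ x, rvDist μ (fun ω => (X ω, Y ω, Z ω)) (x, p.1, p.2) :=
    funext fun b => marg23 μ X Y Z b
  have h3 : rvDist μ Z
      = fun z => ∑ x, ∑ y, rvDist μ (fun ω => (X ω, Y ω, Z ω)) (x, y, z) :=
    funext fun z => marg3 μ X Y Z z
  have := ent_submodular (rvDist μ (fun ω => (X ω, Y ω, Z ω))) hrnn
  unfold condI H
  rw [h13, h23, h3]
  linarith

lemma condI_decomp (hμ0 : ∀ ω, 0 ≤ μ ω) (U : Ω → α) (X : Ω → β) (W : Ω → γ) :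
    condI μ U X W = condH μ X W - condH μ X (fun ω => (U ω, W ω)) := by
  have hswap : H μ (fun ω => (U ω, X ω, W ω)) = H μ (fun ω => (X ω, U ω, W ω)) :=
    H_eq_comp μ hμ0 _ _ (fun t => (t.2.1, t.1, t.2.2)) (fun t => (t.2.1, t.1, t.2.2))
      (fun ω => rfl) (fun ω => rfl)
  unfold condI condH
  rw [hswap]
  ring

lemma condH_comp_le (hμ0 : ∀ ω, 0 ≤ μ ω) (X : Ω → α) (Z : Ω → γ) (f : γ → β) :
    condH μ X Z ≤ condH μ X (fun ω => f (Z ω)) := by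
  have h1 : H μ (fun ω => (Z ω, f (Z ω))) = H μ Z :=
    H_eq_comp μ hμ0 _ _ Prod.fst (fun z => (z, f z)) (fun ω => rfl) (fun ω => rfl)
  have h2 : H μ (fun ω => (X ω, Z ω, f (Z ω))) = H μ (fun ω => (X ω, Z ω)) :=
    H_eq_comp μ hμ0 _ _ (fun t => (t.1, t.2.1)) (fun t => (t.1, t.2, f t.2))
      (fun ω => rfl) (fun ω => rfl)
  have h3 := condI_nonneg μ hμ0 X Z (fun ω => f (Z ω))
  unfold condI at h3
  unfold condH
  linarith

lemma condI_le_condH (hμ0 : ∀ ω, 0 ≤ μ ω) (X : Ω → α) (Y : Ω → β) (Z : Ω → γ) :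
    condI μ X Y Z ≤ condH μ Y Z := by
  have h1 : H μ (fun ω => (X ω, Z ω)) ≤ H μ (fun ω => (X ω, Y ω, Z ω)) :=
    H_comp_le μ hμ0 (fun ω => (X ω, Y ω, Z ω)) (fun t => (t.1, t.2.2))
  unfold condI condH
  linarith

end RV

section Tel
variable {Ω τ δ : Type*} [Fintype Ω] [Fintype τ] [Fintype δ] [DecidableEq τ] [DecidableEq δ]
  (μ : Ω → ℝ)

lemma telescope (hμ0 : ∀ ω, 0 ≤ μ ω) {m : ℕ} (V : Fin m → Ω → τ) (C : Ω → δ) :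
    ∑ i : Fin m, condH μ (V i)
        (fun ω => ((fun j : {j : Fin m // (j : ℕ) < (i : ℕ)} => V j.1 ω), C ω))
      = H μ (fun ω => ((fun i => V i ω), C ω)) - H μ C := by
  classical
  set g : ℕ → ℝ :=
    fun k => H μ (fun ω => ((fun j : {j : Fin m // (j : ℕ) < k} => V j.1 ω), C ω)) with hg
  have step : ∀ i : Fin m,
      condH μ (V i)
        (fun ω => ((fun j : {j : Fin m // (j : ℕ) < (i : ℕ)} => V j.1 ω), C ω))
      = g ((i : ℕ) + 1) - g (i : ℕ) := by
    intro i
    have hfirst :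
        H μ (fun ω => (V i ω,
          ((fun j : {j : Fin m // (j : ℕ) < (i : ℕ)} => V j.1 ω), C ω)))
        = g ((i : ℕ) + 1) := by
      rw [hg]
      refine H_eq_comp μ hμ0 _ _
        (fun p => ((fun j : {j : Fin m // (j : ℕ) < (i : ℕ) + 1} =>
          if h : (j.1 : ℕ) < (i : ℕ) then p.2.1 ⟨j.1, h⟩ else p.1), p.2.2))
        (fun p => (p.1 ⟨i, Nat.lt_succ_self _⟩,
          ((fun j : {j : Fin m // (j : ℕ) < (i : ℕ)} =>
            p.1 ⟨j.1, Nat.lt_succ_of_lt j.2⟩), p.2)))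
        ?_ ?_
      · intro ω
        refine Prod.ext ?_ rfl
        funext j
        dsimp only
        split_ifs with h
        · rfl
        · have hj : j.1 = i := by
            apply Fin.ext
            exact Nat.le_antisymm (Nat.lt_succ_iff.mp j.2) (Nat.not_lt.mp h)
          rw [hj]
      · intro ω
        rfl
    unfold condH
    rw [hfirst]
  rw [Finset.sum_congr rfl fun i _ => step i]
  have hconv : ∑ i : Fin m, (g ((i : ℕ) + 1) - g (i : ℕ))
      = ∑ k ∈ Finset.range m, (g (k + 1) - g k) :=
    Fin.sum_univ_eq_sum_range (fun k => g (k + 1) - g k) m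
  rw [hconv, Finset.sum_range_sub]
  have hgm : g m = H μ (fun ω => ((fun i => V i ω), C ω)) := by
    rw [hg]
    exact H_eq_comp μ hμ0 _ _
      (fun p => ((fun j : Fin m => p.1 ⟨j, j.isLt⟩), p.2))
      (fun p => ((fun j : {j : Fin m // (j : ℕ) < m} => p.1 j.1), p.2))
      (fun ω => rfl) (fun ω => rfl)
  have hg0 : g 0 = H μ C := by
    rw [hg]
    refine H_eq_comp μ hμ0 _ _ Prod.snd
      (fun c => ((fun j : {j : Fin m // (j : ℕ) < 0} =>
        absurd j.2 (Nat.not_lt_zero _)), c)) (fun ω => rfl) ?_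
    intro ω
    refine Prod.ext ?_ rfl
    funext j
    exact absurd j.2 (Nat.not_lt_zero _)
  rw [hgm, hg0]

lemma condH_pi_le (hμ0 : ∀ ω, 0 ≤ μ ω) {m : ℕ} (V : Fin m → Ω → τ) (C : Ω → δ) :
    condH μ (fun ω => fun i => V i ω) C ≤ ∑ i : Fin m, condH μ (V i) C := by
  have ht := telescope μ hμ0 V C
  have hb : ∀ i : Fin m,
      condH μ (V i)
        (fun ω => ((fun j : {j : Fin m // (j : ℕ) < (i : ℕ)} => V j.1 ω), C ω))
      ≤ condH μ (V i) C :=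
    fun i => condH_comp_le μ hμ0 (V i) _ Prod.snd
  have hsum := Finset.sum_le_sum fun i (_ : i ∈ Finset.univ) => hb i
  rw [ht] at hsum
  calc condH μ (fun ω => fun i => V i ω) C
      = H μ (fun ω => ((fun i => V i ω), C ω)) - H μ C := rfl
    _ ≤ _ := hsum
end Tel

set_option synthInstance.maxSize 512

/-- Single-letterization step for the bound `H(Ỹ₂|W,T) ≥ I(U₂,Ỹ₂;X₂|W,T)` in the converse
of Theorem 2: if `(X₂ᵢ, Wᵢ)` are i.i.d. and `K₂` is independent of `(X₂ⁿ, Wⁿ)`, then for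
any `Ỹ₂ⁿ` jointly distributed with `(K₂, X₂ⁿ, Wⁿ)`,
`Σᵢ H(Ỹ₂ᵢ|Wᵢ) ≥ Σᵢ I(K₂, Ỹ₂_{∼i}, Ỹ₂ᵢ; X₂ᵢ | Wᵢ)`. -/
theorem converse_step_H_Y2_bound
    {Ω 𝒳 𝒲 𝒦 ℬ : Type*} [Fintype Ω] [Fintype 𝒳] [Fintype 𝒲] [Fintype 𝒦] [Fintype ℬ]
    [DecidableEq 𝒳] [DecidableEq 𝒲] [DecidableEq 𝒦] [DecidableEq ℬ]
    (n : ℕ) (hn : 0 < n)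
    (μ : Ω → ℝ) (hμ : IsPMF μ)
    (X2v : Fin n → Ω → 𝒳) (Wv : Fin n → Ω → 𝒲) (K2 : Ω → 𝒦) (Ytv : Fin n → Ω → ℬ)
    (q : 𝒳 × 𝒲 → ℝ) (hq : IsPMF q)
    -- the pairs `(X₂ᵢ, Wᵢ)` are i.i.d. with common pmf `q`
    (hiid : ∀ f : Fin n → 𝒳 × 𝒲,
      rvDist μ (fun ω => fun i => (X2v i ω, Wv i ω)) f = ∏ i, q (f i))
    -- `K₂` is independent of `(X₂ⁿ, Wⁿ)`
    (hindep : ∀ (a : 𝒦) (b : Fin n → 𝒳 × 𝒲),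
      rvDist μ (fun ω => (K2 ω, fun i => (X2v i ω, Wv i ω))) (a, b) =
        rvDist μ K2 a * rvDist μ (fun ω => fun i => (X2v i ω, Wv i ω)) b) :
    ∑ i : Fin n, condH μ (Ytv i) (Wv i) ≥
      ∑ i : Fin n,
        condI μ
          (fun ω => (K2 ω, fun j : {j : Fin n // j ≠ i} => Ytv j.1 ω, Ytv i ω))
          (X2v i) (Wv i) := by
  classical
  obtain ⟨hμ0, hμ1⟩ := hμ
  -- notation
  set qW : 𝒲 → ℝ := fun w => ∑ x, q (x, w) with hqW
  have hqWpmf : IsPMF qW := by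
    constructor
    · intro w
      rw [hqW]
      exact Finset.sum_nonneg fun x _ => hq.1 _
    · rw [hqW]
      calc ∑ w, ∑ x, q (x, w) = ∑ x, ∑ w, q (x, w) := Finset.sum_comm
        _ = ∑ p : 𝒳 × 𝒲, q p := (Fintype.sum_prod_type _).symm
        _ = 1 := hq.2
  have hpK : IsPMF (rvDist μ K2) :=
    ⟨rvDist_nonneg μ hμ0 K2, by rw [rvDist_sum]; exact hμ1⟩
  -- marginal distributions of the i.i.d. pairs
  have hdq : ∀ i : Fin n, rvDist μ (fun ω => (X2v i ω, Wv i ω)) = q := by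
    intro i
    funext c
    have h' : rvDist μ (fun ω => (X2v i ω, Wv i ω)) c
        = ∑ b : Fin n → 𝒳 × 𝒲, if b i = c
            then rvDist μ (fun ω => fun i => (X2v i ω, Wv i ω)) b else 0 :=
      rvDist_comp μ (fun ω => fun i => (X2v i ω, Wv i ω)) (fun b => b i) c
    rw [h']
    simp only [hiid]
    exact sum_pi_eval q hq.2 i c
  have hdW : ∀ i : Fin n, rvDist μ (Wv i) = qW := by
    intro i
    funext w
    have h' : rvDist μ (Wv i) w
        = ∑ c : 𝒳 × 𝒲, if c.2 = w then rvDist μ (fun ω => (X2v i ω, Wv i ω)) c else 0 :=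
      rvDist_comp μ (fun ω => (X2v i ω, Wv i ω)) Prod.snd w
    rw [h', hdq i, Fintype.sum_prod_type, hqW]
    refine Finset.sum_congr rfl fun x _ => ?_
    simp
  have hcondXW : ∀ i : Fin n, condH μ (X2v i) (Wv i) = ent q - ent qW := by
    intro i
    unfold condH H
    rw [hdq i, hdW i]
  -- distribution of (K₂, (X,W)ⁿ) and of (K₂, Wⁿ)
  have hKXW : rvDist μ (fun ω => (K2 ω, fun i => (X2v i ω, Wv i ω)))
      = fun p : 𝒦 × (Fin n → 𝒳 × 𝒲) => rvDist μ K2 p.1 * ∏ i, q (p.2 i) := by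
    funext p
    obtain ⟨a, b⟩ := p
    rw [hindep a b, hiid b]
  have hHKXW : H μ (fun ω => (K2 ω, fun i => (X2v i ω, Wv i ω)))
      = ent (rvDist μ K2) + (n : ℝ) * ent q := by
    unfold H
    rw [hKXW]
    calc ent (fun p : 𝒦 × (Fin n → 𝒳 × 𝒲) => rvDist μ K2 p.1 * ∏ i, q (p.2 i))
        = ent (rvDist μ K2) + ent (fun b : Fin n → 𝒳 × 𝒲 => ∏ i, q (b i)) :=
          ent_prod (rvDist μ K2) (fun b : Fin n → 𝒳 × 𝒲 => ∏ i, q (b i)) hpK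
            ⟨fun b => Finset.prod_nonneg fun _ _ => hq.1 _, sum_pi_prod q hq.2 n⟩
      _ = ent (rvDist μ K2) + (n : ℝ) * ent q := by rw [ent_pi q hq n]
  have hHXnZ : H μ (fun ω => ((fun i => X2v i ω), (K2 ω, fun j => Wv j ω)))
      = ent (rvDist μ K2) + (n : ℝ) * ent q := by
    have hswap : H μ (fun ω => ((fun i => X2v i ω), (K2 ω, fun j => Wv j ω)))
        = H μ (fun ω => (K2 ω, fun i => (X2v i ω, Wv i ω))) :=
      H_eq_comp μ hμ0 _ _
        (fun p => (p.2.1, fun i => (p.1 i, p.2.2 i)))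
        (fun p => ((fun i => (p.2 i).1), (p.1, fun i => (p.2 i).2)))
        (fun ω => rfl) (fun ω => rfl)
    rw [hswap, hHKXW]
  have hKW : rvDist μ (fun ω => (K2 ω, fun j => Wv j ω))
      = fun p : 𝒦 × (Fin n → 𝒲) => rvDist μ K2 p.1 * ∏ i, qW (p.2 i) := by
    funext p
    obtain ⟨a, w⟩ := p
    have h' : rvDist μ (fun ω => (K2 ω, fun j => Wv j ω)) (a, w)
        = ∑ p : 𝒦 × (Fin n → 𝒳 × 𝒲), if (p.1, fun i => (p.2 i).2) = (a, w)
            then rvDist μ (fun ω => (K2 ω, fun i => (X2v i ω, Wv i ω))) p else 0 :=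
      rvDist_comp μ (fun ω => (K2 ω, fun i => (X2v i ω, Wv i ω)))
        (fun p => (p.1, fun i => (p.2 i).2)) (a, w)
    rw [h']
    simp only [hKXW, Fintype.sum_prod_type, Prod.mk.injEq, ite_and]
    calc ∑ k, ∑ b : Fin n → 𝒳 × 𝒲, (if k = a then
            (if (fun i => (b i).2) = w then rvDist μ K2 k * ∏ i, q (b i) else 0) else 0)
        = ∑ k, (if k = a then
            ∑ b : Fin n → 𝒳 × 𝒲,
              (if (fun i => (b i).2) = w then rvDist μ K2 k * ∏ i, q (b i) else 0) else 0) := by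
          refine Finset.sum_congr rfl fun k _ => ?_
          split_ifs with h
          · rfl
          · exact Finset.sum_const_zero
      _ = ∑ b : Fin n → 𝒳 × 𝒲,
            (if (fun i => (b i).2) = w then rvDist μ K2 a * ∏ i, q (b i) else 0) := by
          rw [Finset.sum_ite_eq' Finset.univ a]
          simp
      _ = rvDist μ K2 a * ∑ b : Fin n → 𝒳 × 𝒲,
            (if (fun i => (b i).2) = w then ∏ i, q (b i) else 0) := by
          rw [Finset.mul_sum]
          refine Finset.sum_congr rfl fun b _ => ?_
          split_ifs with h
          · rfl
          · rw [mul_zero]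
      _ = rvDist μ K2 a * ∏ i, ∑ c : 𝒳 × 𝒲, (if c.2 = w i then q c else 0) := by
          rw [sum_pi_push q Prod.snd w]
      _ = rvDist μ K2 a * ∏ i, qW (w i) := by
          congr 1
          refine Finset.prod_congr rfl fun i _ => ?_
          rw [Fintype.sum_prod_type, hqW]
          refine Finset.sum_congr rfl fun x _ => ?_
          simp
  have hHKW : H μ (fun ω => (K2 ω, fun j => Wv j ω))
      = ent (rvDist μ K2) + (n : ℝ) * ent qW := by
    unfold H
    rw [hKW]
    calc ent (fun p : 𝒦 × (Fin n → 𝒲) => rvDist μ K2 p.1 * ∏ i, qW (p.2 i))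
        = ent (rvDist μ K2) + ent (fun b : Fin n → 𝒲 => ∏ i, qW (b i)) :=
          ent_prod (rvDist μ K2) (fun b : Fin n → 𝒲 => ∏ i, qW (b i)) hpK
            ⟨fun b => Finset.prod_nonneg fun _ _ => hqWpmf.1 _, sum_pi_prod qW hqWpmf.2 n⟩
      _ = ent (rvDist μ K2) + (n : ℝ) * ent qW := by rw [ent_pi qW hqWpmf n]
  -- sum of single-letter conditional entropies of X given W
  have hsumXW : ∑ i : Fin n, condH μ (X2v i) (Wv i)
      = H μ (fun ω => ((fun i => X2v i ω), (K2 ω, fun j => Wv j ω)))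
        - H μ (fun ω => (K2 ω, fun j => Wv j ω)) := by
    rw [Finset.sum_congr rfl fun i _ => hcondXW i, Finset.sum_const, Finset.card_univ,
      Fintype.card_fin, nsmul_eq_mul, hHXnZ, hHKW]
    ring
  -- per-index bound
  have hA : ∀ i : Fin n,
      condI μ (fun ω => (K2 ω, fun j : {j : Fin n // j ≠ i} => Ytv j.1 ω, Ytv i ω))
        (X2v i) (Wv i)
      ≤ condH μ (X2v i) (Wv i)
        - condH μ (X2v i)
            (fun ω => ((fun j : {j : Fin n // (j : ℕ) < (i : ℕ)} => X2v j.1 ω),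
              (K2 ω, (fun j => Ytv j ω), (fun j => Wv j ω)))) := by
    intro i
    have hdecomp :
        condI μ (fun ω => (K2 ω, fun j : {j : Fin n // j ≠ i} => Ytv j.1 ω, Ytv i ω))
          (X2v i) (Wv i)
        = condH μ (X2v i) (Wv i)
          - condH μ (X2v i)
              (fun ω => ((K2 ω, fun j : {j : Fin n // j ≠ i} => Ytv j.1 ω, Ytv i ω),
                Wv i ω)) :=
      condI_decomp μ hμ0 _ _ _
    have hred :
        condH μ (X2v i)
          (fun ω => ((fun j : {j : Fin n // (j : ℕ) < (i : ℕ)} => X2v j.1 ω),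
            (K2 ω, (fun j => Ytv j ω), (fun j => Wv j ω))))
        ≤ condH μ (X2v i)
            (fun ω => ((K2 ω, fun j : {j : Fin n // j ≠ i} => Ytv j.1 ω, Ytv i ω),
              Wv i ω)) :=
      condH_comp_le μ hμ0 (X2v i)
        (fun ω => ((fun j : {j : Fin n // (j : ℕ) < (i : ℕ)} => X2v j.1 ω),
          (K2 ω, (fun j => Ytv j ω), (fun j => Wv j ω))))
        (fun p => ((p.2.1, fun j : {j : Fin n // j ≠ i} => p.2.2.1 j.1, p.2.2.1 i),
          p.2.2.2 i))
    linarith [hdecomp, hred]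
  -- telescoping over the prefixes
  have htel : ∑ i : Fin n, condH μ (X2v i)
        (fun ω => ((fun j : {j : Fin n // (j : ℕ) < (i : ℕ)} => X2v j.1 ω),
          (K2 ω, (fun j => Ytv j ω), (fun j => Wv j ω))))
      = H μ (fun ω => ((fun i => X2v i ω),
          (K2 ω, (fun j => Ytv j ω), (fun j => Wv j ω))))
        - H μ (fun ω => (K2 ω, (fun j => Ytv j ω), (fun j => Wv j ω))) :=
    telescope μ hμ0 X2v (fun ω => (K2 ω, (fun j => Ytv j ω), (fun j => Wv j ω)))
  -- identify the telescoped difference with a conditional mutual information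
  have hcI : condI μ (fun ω => fun i => X2v i ω) (fun ω => fun i => Ytv i ω)
        (fun ω => (K2 ω, fun j => Wv j ω))
      = H μ (fun ω => ((fun i => X2v i ω), (K2 ω, fun j => Wv j ω)))
        + H μ (fun ω => ((fun i => Ytv i ω), (K2 ω, fun j => Wv j ω)))
        - H μ (fun ω => ((fun i => X2v i ω), (fun i => Ytv i ω), (K2 ω, fun j => Wv j ω)))
        - H μ (fun ω => (K2 ω, fun j => Wv j ω)) := rfl
  have e1 : H μ (fun ω => ((fun i => Ytv i ω), (K2 ω, fun j => Wv j ω)))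
      = H μ (fun ω => (K2 ω, (fun j => Ytv j ω), (fun j => Wv j ω))) :=
    H_eq_comp μ hμ0 _ _
      (fun p => (p.2.1, p.1, p.2.2))
      (fun p => (p.2.1, p.1, p.2.2))
      (fun ω => rfl) (fun ω => rfl)
  have e2 : H μ (fun ω => ((fun i => X2v i ω), (fun i => Ytv i ω), (K2 ω, fun j => Wv j ω)))
      = H μ (fun ω => ((fun i => X2v i ω),
          (K2 ω, (fun j => Ytv j ω), (fun j => Wv j ω)))) :=
    H_eq_comp μ hμ0 _ _
      (fun p => (p.1, p.2.2.1, p.2.1, p.2.2.2))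
      (fun p => (p.1, p.2.2.1, p.2.1, p.2.2.2))
      (fun ω => rfl) (fun ω => rfl)
  -- information bounds on the Y side
  have hIY : condI μ (fun ω => fun i => X2v i ω) (fun ω => fun i => Ytv i ω)
        (fun ω => (K2 ω, fun j => Wv j ω))
      ≤ condH μ (fun ω => fun i => Ytv i ω) (fun ω => (K2 ω, fun j => Wv j ω)) :=
    condI_le_condH μ hμ0 _ _ _
  have hYZ : condH μ (fun ω => fun i => Ytv i ω) (fun ω => (K2 ω, fun j => Wv j ω))
      ≤ condH μ (fun ω => fun i => Ytv i ω) (fun ω => fun j => Wv j ω) :=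
    condH_comp_le μ hμ0 _ _ Prod.snd
  have hsub : condH μ (fun ω => fun i => Ytv i ω) (fun ω => fun j => Wv j ω)
      ≤ ∑ i : Fin n, condH μ (Ytv i) (fun ω => fun j => Wv j ω) :=
    condH_pi_le μ hμ0 Ytv (fun ω => fun j => Wv j ω)
  have hlast : ∀ i : Fin n, condH μ (Ytv i) (fun ω => fun j => Wv j ω)
      ≤ condH μ (Ytv i) (Wv i) :=
    fun i => condH_comp_le μ hμ0 (Ytv i) (fun ω => fun j => Wv j ω) (fun w => w i)
  have hlastsum := Finset.sum_le_sum fun i (_ : i ∈ Finset.univ) => hlast i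
  have hAsum := Finset.sum_le_sum fun i (_ : i ∈ Finset.univ) => hA i
  rw [Finset.sum_sub_distrib] at hAsum
  rw [ge_iff_le]
  linarith [hAsum, hsumXW, htel, hcI, e1, e2, hIY, hYZ, hsub, hlastsum]
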